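/- arXiv:1101.0428 — 6 statements merged into one kernel-verified Lean document; each statement's English description precedes it below -/
import Mathlib

section
/- Let Q : ℝ^m → ℝ be differentiable at a ∈ [-1,1]^m, suppose Q attains its maximum over [-1,1]^m at a, and let P be a real n × m matrix such that for every index i with |a^i| = 1 and ∂Q/∂a^i(a) ≠ 0, the i-th column of P is zero. Then P · ∇Q(a) = 0, where ∇Q(a) ∈ ℝ^m is the gradient of Q at a. -/
/-! Along an unsaturated coordinate the box contains a neighbourhood of `a`, so Fermat's rule
kills that partial derivative; every other entry of the gradient meets a zero column of `P`. -/

open Matrix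

theorem IsMaxOn.fderiv_apply_single_eq_zero {ι : Type*} [Fintype ι] [DecidableEq ι]
    {Q : (ι → ℝ) → ℝ} {s : ι → Set ℝ} {a : ι → ℝ} {i : ι}
    (hmax : IsMaxOn Q (Set.univ.pi s) a) (ha : a ∈ Set.univ.pi s) (hi : s i ∈ nhds (a i))
    (hQ : DifferentiableAt ℝ Q a) :
    fderiv ℝ Q a (Pi.single i 1) = 0 := by
  have hderiv : HasDerivAt (fun t => Q (Function.update a i t))
      (fderiv ℝ Q a (Pi.single i 1)) (a i) := by
    have hQ' : HasFDerivAt Q (fderiv ℝ Q a) (Function.update a i (a i)) := by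
      simpa using hQ.hasFDerivAt
    exact hQ'.comp_hasDerivAt (a i) (hasDerivAt_update a i (a i))
  have hloc : IsLocalMax (fun t => Q (Function.update a i t)) (a i) := by
    filter_upwards [hi] with t ht
    simpa using hmax ((Set.update_mem_pi_iff_of_mem ha).2 fun _ => ht)
  exact hloc.hasDerivAt_eq_zero hderiv

theorem Matrix.mulVec_eq_zero_of_col_eq_zero {R m n : Type*} [Fintype n]
    [NonUnitalNonAssocSemiring R]
    (P : Matrix m n R) (v : n → R) (hP : ∀ i, v i ≠ 0 → ∀ j, P j i = 0) : P *ᵥ v = 0 := by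
  funext j
  refine Finset.sum_eq_zero fun i _ => ?_
  by_cases hv : v i = 0
  · simp [hv]
  · simp [hP i hv j]

/-- if `Q` is maximized over the box `[-1,1]^m` at `a` and the
columns of `P` vanish at every saturated coordinate, then `P ⬝ ∇Q(a) = 0`. -/
theorem stmt2 {n m : ℕ} (Q : (Fin m → ℝ) → ℝ) (a : Fin m → ℝ)
    (hQ : DifferentiableAt ℝ Q a)
    (ha : ∀ i, a i ∈ Set.Icc (-1 : ℝ) 1)
    (hmax : ∀ b : Fin m → ℝ, (∀ i, b i ∈ Set.Icc (-1 : ℝ) 1) → Q b ≤ Q a)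
    (P : Matrix (Fin n) (Fin m) ℝ)
    (hP : ∀ i, |a i| = 1 → fderiv ℝ Q a (Pi.single i 1) ≠ 0 → ∀ j, P j i = 0) :
    P.mulVec (fun i => fderiv ℝ Q a (Pi.single i 1)) = 0 := by
  refine P.mulVec_eq_zero_of_col_eq_zero _ fun i hi => hP i ?_ hi
  by_contra hsat
  obtain ⟨hlo, hhi⟩ := abs_lt.1 (lt_of_le_of_ne (abs_le.2 (ha i)) hsat)
  exact hi <| IsMaxOn.fderiv_apply_single_eq_zero (s := fun _ => Set.Icc (-1) 1)
    (fun b hb => hmax b fun j => hb j trivial) (fun j _ => ha j) (Icc_mem_nhds hlo hhi) hQ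
end

section
/- With the trajectory setup and x₀ fixed, view the total reward R = Σ_{t=0}^{F−1} γᵗ r(x_t, a_t) as a function of the whole action tuple (a₀, …, a_{F−1}) ∈ (ℝᵐ)^F. Then R is differentiable at (a₀, …, a_{F−1}), and for each 0 ≤ t < F the block of its derivative corresponding to a_t equals γᵗ ( ∇_a r(x_t, a_t) + γ (D_a f(x_t, a_t))ᵀ ∇R_{t+1}(x_{t+1}) ), where R_{t+1} is the reward-to-go function of the state determined by the fixed actions a_{t+1}, …, a_{F−1}. -/
/-! Perturbing only the action `a_t` leaves the first `t` rewards and the state `x_t` unchanged.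
Since the backward recursion determines `R_{t+1}` as the discounted reward of the remaining
actions, the total reward as a function of `a_t` alone is a constant plus
`γ^t (r(x_t, a_t) + γ R_{t+1}(f(x_t, a_t)))`, and the block formula is the chain rule for this
function written in coordinates. -/

open Matrix

/-- Gradient of a scalar function, as a vector of partial derivatives. -/
noncomputable def grad {k : ℕ} (g : (Fin k → ℝ) → ℝ) (x : Fin k → ℝ) : Fin k → ℝ :=
  fun i => fderiv ℝ g x (Pi.single i 1)

/-- Gradient of `r` in the action variable. -/
noncomputable def gradA {n m : ℕ} (r : (Fin n → ℝ) × (Fin m → ℝ) → ℝ)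
    (x : Fin n → ℝ) (a : Fin m → ℝ) : Fin m → ℝ :=
  fun i => fderiv ℝ (fun b => r (x, b)) a (Pi.single i 1)

/-- Jacobian of `f` in the action variable (rows indexed by output components). -/
noncomputable def jacA {n m : ℕ} (f : (Fin n → ℝ) × (Fin m → ℝ) → Fin n → ℝ)
    (x : Fin n → ℝ) (a : Fin m → ℝ) : Matrix (Fin n) (Fin m) ℝ :=
  Matrix.of fun j i => fderiv ℝ (fun b => f (x, b) j) a (Pi.single i 1)

/-- Extend a finite action tuple to all of `ℕ` (by `0` beyond `F`). -/
noncomputable def pad {F m : ℕ} (as : Fin F → Fin m → ℝ) : ℕ → Fin m → ℝ :=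
  fun t => if h : t < F then as ⟨t, h⟩ else 0

/-- The trajectory generated from `x₀` by the actions `as`. -/
def traj {n m : ℕ} (f : (Fin n → ℝ) × (Fin m → ℝ) → Fin n → ℝ)
    (x₀ : Fin n → ℝ) (as : ℕ → Fin m → ℝ) : ℕ → Fin n → ℝ
  | 0 => x₀
  | t + 1 => f (traj f x₀ as t, as t)

/-- The total (discounted) reward, as a function of the whole action tuple. -/
noncomputable def Rtot {n m : ℕ} (F : ℕ) (γ : ℝ)
    (f : (Fin n → ℝ) × (Fin m → ℝ) → Fin n → ℝ)
    (r : (Fin n → ℝ) × (Fin m → ℝ) → ℝ)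
    (x₀ : Fin n → ℝ) (as : Fin F → Fin m → ℝ) : ℝ :=
  ∑ t ∈ Finset.range F, γ ^ t * r (traj f x₀ (pad as) t, pad as t)

section Trajectory

variable {n m : ℕ} (f : (Fin n → ℝ) × (Fin m → ℝ) → Fin n → ℝ)

lemma traj_congr (x₀ : Fin n → ℝ) {as as' : ℕ → Fin m → ℝ} {s : ℕ}
    (h : ∀ u < s, as u = as' u) : traj f x₀ as s = traj f x₀ as' s := by
  induction s with
  | zero => rfl
  | succ s ih =>
    simp only [traj, ih fun u hu => h u (hu.trans s.lt_succ_self), h s s.lt_succ_self]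

lemma traj_add (x₀ : Fin n → ℝ) (as : ℕ → Fin m → ℝ) (u j : ℕ) :
    traj f x₀ as (u + j) = traj f (traj f x₀ as u) (fun i => as (u + i)) j := by
  induction j with
  | zero => rfl
  | succ j ih => rw [← add_assoc, traj, ih]; rfl

lemma differentiable_traj_state (hf : Differentiable ℝ f) (as : ℕ → Fin m → ℝ) (j : ℕ) :
    Differentiable ℝ fun y => traj f y as j := by
  induction j with
  | zero => exact differentiable_id
  | succ j ih => exact hf.comp (ih.prodMk (differentiable_const _))

lemma differentiable_pad {F : ℕ} (u : ℕ) :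
    Differentiable ℝ fun as : Fin F → Fin m → ℝ => pad as u := by
  unfold pad
  split_ifs with h
  · exact differentiable_apply _
  · exact differentiable_const _

lemma pad_update {F : ℕ} (a : Fin F → Fin m → ℝ) (t : Fin F) (b : Fin m → ℝ) :
    pad (Function.update a t b) = Function.update (pad a) t b := by
  ext1 u
  by_cases hu : u < F
  · obtain rfl | hne := eq_or_ne ⟨u, hu⟩ t
    · simp [pad, hu]
    · have : u ≠ t := fun h => hne (Fin.ext h)
      simp [pad, hu, Function.update_of_ne hne, Function.update_of_ne this]
  · have : u ≠ t := by omega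
    simp [pad, hu, Function.update_of_ne this]

lemma differentiable_traj_pad {F : ℕ} (hf : Differentiable ℝ f) (x₀ : Fin n → ℝ) (s : ℕ) :
    Differentiable ℝ fun as : Fin F → Fin m → ℝ => traj f x₀ (pad as) s := by
  induction s with
  | zero => exact differentiable_const _
  | succ s ih => exact hf.comp (ih.prodMk (differentiable_pad s))

end Trajectory

section DiscountedReward

variable {n m : ℕ} (f : (Fin n → ℝ) × (Fin m → ℝ) → Fin n → ℝ)
  (r : (Fin n → ℝ) × (Fin m → ℝ) → ℝ) (γ : ℝ)

noncomputable def discountedReward (as : ℕ → Fin m → ℝ) (k : ℕ) (y : Fin n → ℝ) : ℝ :=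
  ∑ j ∈ Finset.range k, γ ^ j * r (traj f y as j, as j)

lemma Rtot_eq_discountedReward (F : ℕ) (x₀ : Fin n → ℝ) (a : Fin F → Fin m → ℝ) :
    Rtot F γ f r x₀ a = discountedReward f r γ (pad a) F x₀ :=
  rfl

lemma discountedReward_add (as : ℕ → Fin m → ℝ) (t k : ℕ) (y : Fin n → ℝ) :
    discountedReward f r γ as (t + k) y = discountedReward f r γ as t y +
      γ ^ t * discountedReward f r γ (fun i => as (t + i)) k (traj f y as t) := by
  simp only [discountedReward, Finset.sum_range_add, Finset.mul_sum, traj_add, pow_add, mul_assoc]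

lemma discountedReward_succ (as : ℕ → Fin m → ℝ) (k : ℕ) (y : Fin n → ℝ) :
    discountedReward f r γ as (k + 1) y =
      r (y, as 0) + γ * discountedReward f r γ (fun i => as (1 + i)) k (f (y, as 0)) := by
  rw [add_comm, discountedReward_add]
  simp [discountedReward, traj]

lemma discountedReward_congr {as as' : ℕ → Fin m → ℝ} {k : ℕ} (h : ∀ u < k, as u = as' u)
    (y : Fin n → ℝ) : discountedReward f r γ as k y = discountedReward f r γ as' k y := by
  refine Finset.sum_congr rfl fun j hj => ?_
  have hj : j < k := Finset.mem_range.mp hj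
  rw [traj_congr f y fun u hu => h u (hu.trans hj), h j hj]

lemma discountedReward_update (as : ℕ → Fin m → ℝ) {t K : ℕ} (ht : t < K) (y : Fin n → ℝ)
    (b : Fin m → ℝ) :
    discountedReward f r γ (Function.update as t b) K y =
      discountedReward f r γ as t y + γ ^ t * (r (traj f y as t, b) +
        γ * discountedReward f r γ (fun i => as (t + 1 + i)) (K - (t + 1))
          (f (traj f y as t, b))) := by
  obtain ⟨k, rfl⟩ : ∃ k, K = t + (k + 1) := ⟨K - (t + 1), by omega⟩
  have below : ∀ u < t, Function.update as t b u = as u := fun u hu =>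
    Function.update_of_ne hu.ne _ _
  have above : (fun i => Function.update as t b (t + (1 + i))) = fun i => as (t + 1 + i) :=
    funext fun i => by rw [Function.update_of_ne (by omega), add_assoc]
  rw [discountedReward_add, discountedReward_succ, discountedReward_congr f r γ below,
    traj_congr f y below, show t + (k + 1) - (t + 1) = k by omega]
  simp only [add_zero, Function.update_self, above]

lemma differentiable_discountedReward (hf : Differentiable ℝ f) (hr : Differentiable ℝ r)
    (as : ℕ → Fin m → ℝ) (k : ℕ) : Differentiable ℝ (discountedReward f r γ as k) :=
  Differentiable.fun_sum fun j _ =>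
    (hr.comp ((differentiable_traj_state f hf as j).prodMk (differentiable_const _))).const_mul _

lemma eq_discountedReward_of_rec {F : ℕ} {as : ℕ → Fin m → ℝ} {R : ℕ → (Fin n → ℝ) → ℝ}
    (hRF : ∀ y, R F y = 0)
    (hRrec : ∀ t < F, ∀ y, R t y = r (y, as t) + γ * R (t + 1) (f (y, as t))) :
    ∀ u ≤ F, R u = discountedReward f r γ (fun i => as (u + i)) (F - u) := by
  intro u hu
  induction hu using Nat.decreasingInduction with
  | self => ext y; simp [hRF, discountedReward]
  | of_succ u hu ih =>
    ext y
    rw [hRrec u hu, ih, show F - u = F - (u + 1) + 1 by omega, discountedReward_succ]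
    simp only [add_zero, add_assoc, add_comm 1]

lemma differentiable_Rtot (hf : Differentiable ℝ f) (hr : Differentiable ℝ r) (F : ℕ)
    (x₀ : Fin n → ℝ) : Differentiable ℝ (Rtot F γ f r x₀) :=
  Differentiable.fun_sum fun s _ =>
    (hr.comp ((differentiable_traj_pad f hf x₀ s).prodMk (differentiable_pad s))).const_mul _

end DiscountedReward

lemma fderiv_apply_single_eq_fderiv_update {𝕜 : Type*} [NontriviallyNormedField 𝕜]
    {ι : Type*} [Fintype ι] [DecidableEq ι]
    {E : ι → Type*} [∀ i, NormedAddCommGroup (E i)] [∀ i, NormedSpace 𝕜 (E i)]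
    {G : Type*} [NormedAddCommGroup G] [NormedSpace 𝕜 G] {Φ : (∀ i, E i) → G} {a : ∀ i, E i}
    (hΦ : DifferentiableAt 𝕜 Φ a) (t : ι) (v : E t) :
    fderiv 𝕜 Φ a (Pi.single t v) = fderiv 𝕜 (fun b => Φ (Function.update a t b)) (a t) v := by
  have hΦ' : DifferentiableAt 𝕜 Φ (Function.update a t (a t)) := by
    rwa [Function.update_eq_self]
  rw [← Function.comp_def, fderiv_comp _ hΦ' (hasFDerivAt_update a (a t)).differentiableAt,
    fderiv_update, Function.update_eq_self, ContinuousLinearMap.comp_apply]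
  congr 1
  ext1 s
  obtain rfl | hs := eq_or_ne s t <;> simp [*]

lemma ContinuousLinearMap.apply_eq_sum_mul_apply_single {𝕜 : Type*} [NontriviallyNormedField 𝕜]
    {ι : Type*} [Fintype ι] [DecidableEq ι] (L : (ι → 𝕜) →L[𝕜] 𝕜) (v : ι → 𝕜) :
    L v = ∑ j, v j * L (Pi.single j 1) := by
  conv_lhs => rw [pi_eq_sum_univ' v]
  simp [map_sum]

lemma fderiv_comp_apply_single_eq_mulVec {n m : ℕ} {f : (Fin n → ℝ) × (Fin m → ℝ) → Fin n → ℝ}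
    {h : (Fin n → ℝ) → ℝ} {x : Fin n → ℝ} {b₀ : Fin m → ℝ} (hf : DifferentiableAt ℝ f (x, b₀))
    (hh : DifferentiableAt ℝ h (f (x, b₀))) (i : Fin m) :
    fderiv ℝ (fun b => h (f (x, b))) b₀ (Pi.single i 1) =
      ((jacA f x b₀)ᵀ *ᵥ grad h (f (x, b₀))) i := by
  have hfx : DifferentiableAt ℝ (fun b => f (x, b)) b₀ :=
    hf.comp b₀ ((differentiableAt_const x).prodMk differentiableAt_id)
  rw [← Function.comp_def h, fderiv_comp b₀ hh hfx, ContinuousLinearMap.comp_apply,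
    ContinuousLinearMap.apply_eq_sum_mul_apply_single]
  simp only [mulVec, dotProduct, transpose_apply, jacA, grad, of_apply, fderiv_apply hfx]
  rfl

lemma grad_reward_step {n m : ℕ} {f : (Fin n → ℝ) × (Fin m → ℝ) → Fin n → ℝ}
    {r : (Fin n → ℝ) × (Fin m → ℝ) → ℝ} {h : (Fin n → ℝ) → ℝ} (γ : ℝ)
    {x : Fin n → ℝ} {b₀ : Fin m → ℝ} (hf : DifferentiableAt ℝ f (x, b₀))
    (hr : DifferentiableAt ℝ r (x, b₀)) (hh : DifferentiableAt ℝ h (f (x, b₀))) :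
    (fun i => fderiv ℝ (fun b => r (x, b) + γ * h (f (x, b))) b₀ (Pi.single i 1)) =
      gradA r x b₀ + γ • (jacA f x b₀)ᵀ *ᵥ grad h (f (x, b₀)) := by
  have hrx : DifferentiableAt ℝ (fun b => r (x, b)) b₀ :=
    hr.comp b₀ ((differentiableAt_const x).prodMk differentiableAt_id)
  have hhf : DifferentiableAt ℝ (fun b => h (f (x, b))) b₀ :=
    (hh.comp _ hf).comp b₀ ((differentiableAt_const x).prodMk differentiableAt_id)
  ext i
  rw [fderiv_fun_add hrx (hhf.const_mul γ), fderiv_const_mul hhf, _root_.add_apply,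
    _root_.smul_apply, fderiv_comp_apply_single_eq_mulVec hf hh]
  rfl

theorem stmt4_general {n m : ℕ} (F : ℕ) (γ : ℝ)
    (f : (Fin n → ℝ) × (Fin m → ℝ) → Fin n → ℝ)
    (r : (Fin n → ℝ) × (Fin m → ℝ) → ℝ)
    (hf : ContDiff ℝ 1 f) (hr : ContDiff ℝ 1 r)
    (x₀ : Fin n → ℝ) (a : Fin F → Fin m → ℝ)
    (R : ℕ → (Fin n → ℝ) → ℝ)
    (hRF : ∀ y, R F y = 0)
    (hRrec : ∀ t < F, ∀ y, R t y = r (y, pad a t) + γ * R (t + 1) (f (y, pad a t))) :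
    DifferentiableAt ℝ (Rtot F γ f r x₀) a ∧
    ∀ t : Fin F,
      (fun i => fderiv ℝ (Rtot F γ f r x₀) a (Pi.single t (Pi.single i 1))) =
      γ ^ (t : ℕ) •
        (gradA r (traj f x₀ (pad a) t) (a t) +
          γ • (jacA f (traj f x₀ (pad a) t) (a t))ᵀ.mulVec
            (grad (R ((t : ℕ) + 1)) (traj f x₀ (pad a) ((t : ℕ) + 1)))) := by
  have hfd := hf.differentiable one_ne_zero
  have hrd := hr.differentiable one_ne_zero
  have hdiff := differentiable_Rtot f r γ hfd hrd F x₀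
  refine ⟨hdiff a, fun t => ?_⟩
  set x := traj f x₀ (pad a) t
  have hR : R (t + 1) = discountedReward f r γ (fun i => pad a (t + 1 + i)) (F - (t + 1)) :=
    eq_discountedReward_of_rec f r γ hRF hRrec _ t.isLt
  have hRd : Differentiable ℝ (R (t + 1)) := hR ▸ differentiable_discountedReward f r γ hfd hrd _ _
  have hsplit : (fun b => Rtot F γ f r x₀ (Function.update a t b)) = fun b =>
      discountedReward f r γ (pad a) t x₀ +
        γ ^ (t : ℕ) * (r (x, b) + γ * R (t + 1) (f (x, b))) := by
    ext b
    rw [Rtot_eq_discountedReward, pad_update, discountedReward_update _ _ _ _ t.isLt, hR]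
  have hx : traj f x₀ (pad a) (t + 1) = f (x, a t) := by simp [traj, pad, x]
  have hstep : DifferentiableAt ℝ (fun b => r (x, b) + γ * R (t + 1) (f (x, b))) (a t) := by
    fun_prop
  funext i
  rw [fderiv_apply_single_eq_fderiv_update (hdiff a), hsplit, fderiv_const_add,
    fderiv_const_mul hstep, hx, ← grad_reward_step γ (hfd _) (hrd _) (hRd _)]
  rfl

/-- differentiability of the total reward in the action tuple,
and the formula for the `a_t`-block of its derivative. -/
theorem stmt4 {n m : ℕ} (F : ℕ) (hF : 1 ≤ F) (γ : ℝ)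
    (f : (Fin n → ℝ) × (Fin m → ℝ) → Fin n → ℝ)
    (r : (Fin n → ℝ) × (Fin m → ℝ) → ℝ)
    (hf : ContDiff ℝ 1 f) (hr : ContDiff ℝ 1 r)
    (x₀ : Fin n → ℝ) (a : Fin F → Fin m → ℝ)
    (R : ℕ → (Fin n → ℝ) → ℝ)
    (hRF : ∀ y, R F y = 0)
    (hRrec : ∀ t < F, ∀ y, R t y = r (y, pad a t) + γ * R (t + 1) (f (y, pad a t))) :
    DifferentiableAt ℝ (Rtot F γ f r x₀) a ∧
    ∀ t : Fin F,
      (fun i => fderiv ℝ (Rtot F γ f r x₀) a (Pi.single t (Pi.single i 1))) =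
      γ ^ (t : ℕ) •
        (gradA r (traj f x₀ (pad a) t) (a t) +
          γ • (jacA f (traj f x₀ (pad a) t) (a t))ᵀ.mulVec
            (grad (R ((t : ℕ) + 1)) (traj f x₀ (pad a) ((t : ℕ) + 1)))) :=
  stmt4_general F γ f r hf hr x₀ a R hRF hRrec
end

section
/- With the trajectory setup, let G : {0,…,F} → ℝⁿ and let P_t be n × m real matrices for 0 ≤ t < F. Suppose G_F = 0 and for all 0 ≤ t < F both: (i) G_t = ∇_x r(x_t, a_t) + P_t ∇_a r(x_t, a_t) + γ (D_x f(x_t, a_t))ᵀ G_{t+1} + γ P_t (D_a f(x_t, a_t))ᵀ G_{t+1}, and (ii) P_t ( ∇_a r(x_t, a_t) + γ (D_a f(x_t, a_t))ᵀ G_{t+1} ) = 0. Then for all 0 ≤ t ≤ F, G_t = ∇R_t(x_t), the gradient of the reward-to-go function at the trajectory state x_t. -/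
open Matrix

/-- Gradient of `r` in the state variable. -/
noncomputable def gradX {n m : ℕ} (r : (Fin n → ℝ) × (Fin m → ℝ) → ℝ)
    (x : Fin n → ℝ) (a : Fin m → ℝ) : Fin n → ℝ :=
  fun i => fderiv ℝ (fun y => r (y, a)) x (Pi.single i 1)

/-- Jacobian of `f` in the state variable (rows indexed by output components). -/
noncomputable def jacX {n m : ℕ} (f : (Fin n → ℝ) × (Fin m → ℝ) → Fin n → ℝ)
    (x : Fin n → ℝ) (a : Fin m → ℝ) : Matrix (Fin n) (Fin n) ℝ :=
  Matrix.of fun j i => fderiv ℝ (fun y => f (y, a) j) x (Pi.single i 1)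

/-! Backward induction on `t`. The greedy identity (ii) cancels the `P_t`-terms of (i), leaving
`G_t = ∇ₓr(x_t, a_t) + γ (Dₓf(x_t, a_t))ᵀ G_{t+1}`, which is exactly the chain rule applied to the
Bellman recursion `R_t = r(·, a_t) + γ R_{t+1} ∘ f(·, a_t)` at `x_t`. -/

noncomputable def jacobian {k l : ℕ} (g : (Fin k → ℝ) → Fin l → ℝ) (x : Fin k → ℝ) :
    Matrix (Fin l) (Fin k) ℝ :=
  Matrix.of fun j i => fderiv ℝ (fun y => g y j) x (Pi.single i 1)

section Gradient

variable {k l : ℕ}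

lemma fderiv_apply_eq_dotProduct_grad (h : (Fin k → ℝ) → ℝ) (x v : Fin k → ℝ) :
    fderiv ℝ h x v = v ⬝ᵥ grad h x := by
  refine ((fderiv ℝ h x).toLinearMap.pi_apply_eq_sum_univ v).trans ?_
  refine Finset.sum_congr rfl fun i _ => ?_
  have hsingle : (fun j => if i = j then (1 : ℝ) else 0) = Pi.single i 1 := by
    ext j
    simp [Pi.single_apply, eq_comm]
  rw [hsingle, smul_eq_mul]
  rfl

lemma grad_add {g h : (Fin k → ℝ) → ℝ} {x : Fin k → ℝ}
    (hg : DifferentiableAt ℝ g x) (hh : DifferentiableAt ℝ h x) :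
    grad (fun y => g y + h y) x = grad g x + grad h x := by
  ext i
  simp [grad, fderiv_fun_add hg hh]

lemma grad_const_mul (c : ℝ) (g : (Fin k → ℝ) → ℝ) (x : Fin k → ℝ) :
    grad (fun y => c * g y) x = c • grad g x := by
  ext i
  change fderiv ℝ (c • g) x _ = _
  rw [fderiv_const_smul_field]
  rfl

lemma grad_comp {g : (Fin k → ℝ) → Fin l → ℝ} {h : (Fin l → ℝ) → ℝ} {x : Fin k → ℝ}
    (hh : DifferentiableAt ℝ h (g x)) (hg : DifferentiableAt ℝ g x) :
    grad (fun y => h (g y)) x = (jacobian g x)ᵀ *ᵥ grad h (g x) := by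
  ext i
  rw [grad, fderiv_fun_comp x hh hg, ContinuousLinearMap.comp_apply,
    fderiv_apply_eq_dotProduct_grad]
  congr 1
  ext j
  simp [jacobian, fderiv_apply hg j]

end Gradient

lemma grad_bellman_step {n m : ℕ} {f : (Fin n → ℝ) × (Fin m → ℝ) → Fin n → ℝ}
    {r : (Fin n → ℝ) × (Fin m → ℝ) → ℝ} {V : (Fin n → ℝ) → ℝ} (γ : ℝ)
    {y : Fin n → ℝ} {b : Fin m → ℝ} (hf : DifferentiableAt ℝ f (y, b))
    (hr : DifferentiableAt ℝ r (y, b)) (hV : DifferentiableAt ℝ V (f (y, b))) :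
    grad (fun z => r (z, b) + γ * V (f (z, b))) y =
      gradX r y b + γ • (jacX f y b)ᵀ *ᵥ grad V (f (y, b)) := by
  have hfy : DifferentiableAt ℝ (fun z => f (z, b)) y :=
    hf.comp y (differentiableAt_id.prodMk (differentiableAt_const b))
  have hry : DifferentiableAt ℝ (fun z => r (z, b)) y :=
    hr.comp y (differentiableAt_id.prodMk (differentiableAt_const b))
  have hVf : DifferentiableAt ℝ (fun z => V (f (z, b))) y := hV.comp y hfy
  rw [grad_add hry (hVf.const_mul γ), grad_const_mul, grad_comp hV hfy]
  -- `gradX r y b` and `jacX f y b` are definitionally `grad` and `jacobian` of the partial maps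
  rfl

lemma differentiable_rewardToGo {n m F : ℕ} {γ : ℝ}
    {f : (Fin n → ℝ) × (Fin m → ℝ) → Fin n → ℝ} {r : (Fin n → ℝ) × (Fin m → ℝ) → ℝ}
    {a : ℕ → Fin m → ℝ} {R : ℕ → (Fin n → ℝ) → ℝ}
    (hf : Differentiable ℝ f) (hr : Differentiable ℝ r) (hRF : ∀ y, R F y = 0)
    (hRrec : ∀ t < F, ∀ y, R t y = r (y, a t) + γ * R (t + 1) (f (y, a t)))
    {t : ℕ} (ht : t ≤ F) :
    Differentiable ℝ (R t) := by
  induction ht using Nat.decreasingInduction with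
  | self => rw [funext hRF]; exact differentiable_const 0
  | of_succ t ht ih => rw [funext (hRrec t ht)]; fun_prop

theorem stmt5_general {n m : ℕ} (F : ℕ) (γ : ℝ)
    (f : (Fin n → ℝ) × (Fin m → ℝ) → Fin n → ℝ)
    (r : (Fin n → ℝ) × (Fin m → ℝ) → ℝ)
    (hf : ContDiff ℝ 1 f) (hr : ContDiff ℝ 1 r)
    (a : ℕ → Fin m → ℝ)
    (x : ℕ → Fin n → ℝ)
    (hx : ∀ t < F, x (t + 1) = f (x t, a t))
    (R : ℕ → (Fin n → ℝ) → ℝ)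
    (hRF : ∀ y, R F y = 0)
    (hRrec : ∀ t < F, ∀ y, R t y = r (y, a t) + γ * R (t + 1) (f (y, a t)))
    (G : ℕ → Fin n → ℝ) (P : ℕ → Matrix (Fin n) (Fin m) ℝ)
    (hGF : G F = 0)
    (hGrec : ∀ t < F, G t =
      gradX r (x t) (a t) + (P t).mulVec (gradA r (x t) (a t)) +
        γ • (jacX f (x t) (a t))ᵀ.mulVec (G (t + 1)) +
        γ • (P t).mulVec ((jacA f (x t) (a t))ᵀ.mulVec (G (t + 1))))
    (hPzero : ∀ t < F, (P t).mulVec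
      (gradA r (x t) (a t) + γ • (jacA f (x t) (a t))ᵀ.mulVec (G (t + 1))) = 0) :
    ∀ t ≤ F, G t = grad (R t) (x t) := by
  have hfd := hf.differentiable one_ne_zero
  have hrd := hr.differentiable one_ne_zero
  intro t ht
  induction ht using Nat.decreasingInduction with
  | self =>
    rw [hGF, funext hRF]
    ext
    simp [grad]
  | of_succ t ht ih =>
    have hgreedy : G t = gradX r (x t) (a t) + γ • (jacX f (x t) (a t))ᵀ *ᵥ G (t + 1) := by
      have hcancel := hPzero t ht
      rw [mulVec_add, mulVec_smul] at hcancel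
      rw [hGrec t ht]
      linear_combination (norm := module) hcancel
    have hV := differentiable_rewardToGo hfd hrd hRF hRrec ht
    rw [hgreedy, ih, hx t ht, funext (hRrec t ht),
      grad_bellman_step γ (hfd _) (hrd _) (hV _)]

/-- if `G` satisfies the target value-gradient recursion with
`G' = G` substituted (with matrices `P_t` playing the role of `∂π/∂x`) and the
greedy-policy identity `P_t (∂Q/∂a) = 0`, then `G_t` equals the gradient of the
reward-to-go at every trajectory state. -/
theorem stmt5 {n m : ℕ} (F : ℕ) (hF : 1 ≤ F) (γ : ℝ)
    (f : (Fin n → ℝ) × (Fin m → ℝ) → Fin n → ℝ)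
    (r : (Fin n → ℝ) × (Fin m → ℝ) → ℝ)
    (hf : ContDiff ℝ 1 f) (hr : ContDiff ℝ 1 r)
    (x₀ : Fin n → ℝ) (a : ℕ → Fin m → ℝ)
    (x : ℕ → Fin n → ℝ) (hx0 : x 0 = x₀)
    (hx : ∀ t < F, x (t + 1) = f (x t, a t))
    (R : ℕ → (Fin n → ℝ) → ℝ)
    (hRF : ∀ y, R F y = 0)
    (hRrec : ∀ t < F, ∀ y, R t y = r (y, a t) + γ * R (t + 1) (f (y, a t)))
    (G : ℕ → Fin n → ℝ) (P : ℕ → Matrix (Fin n) (Fin m) ℝ)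
    (hGF : G F = 0)
    (hGrec : ∀ t < F, G t =
      gradX r (x t) (a t) + (P t).mulVec (gradA r (x t) (a t)) +
        γ • (jacX f (x t) (a t))ᵀ.mulVec (G (t + 1)) +
        γ • (P t).mulVec ((jacA f (x t) (a t))ᵀ.mulVec (G (t + 1))))
    (hPzero : ∀ t < F, (P t).mulVec
      (gradA r (x t) (a t) + γ • (jacA f (x t) (a t))ᵀ.mulVec (G (t + 1))) = 0) :
    ∀ t ≤ F, G t = grad (R t) (x t) :=
  stmt5_general F γ f r hf hr a x hx R hRF hRrec G P hGF hGrec hPzero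
end

section
/- With the trajectory and greedy setup with unbound actions, suppose each action a_t ∈ ℝᵐ is a local maximum over all of ℝᵐ of the function Q_t(a) = r(x_t, a) + γ Ṽ(f(x_t, a)), and suppose the value-gradients G_t := ∇Ṽ(x_t) satisfy G_F = 0 and the costate recursion G_t = ∇_x r(x_t, a_t) + γ (D_x f(x_t, a_t))ᵀ G_{t+1} for 0 ≤ t < F. Then the action tuple (a₀, …, a_{F−1}) is a critical point of the total reward: the Fréchet derivative of the map (a₀,…,a_{F−1}) ↦ R (with x₀ fixed) is zero at (a₀, …, a_{F−1}). -/
open Matrix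

/-!
Perturb the actions in a direction `v` and let `δx_t` be the induced perturbation of the
trajectory, so `δx_0 = 0` and `δx_{t+1} = D_x f · δx_t + D_a f · v_t`. The directional derivative
of `R` is `∑ γ^t (D_x r · δx_t + D_a r · v_t)`. Since `x_{t+1} = f(x_t, a_t)`, stationarity of
`Q_t` at `a_t` reads `D_a r + γ G_{t+1} · D_a f = 0`, and together with the costate recursion this
turns the `t`-th term into `γ^t G_t · δx_t - γ^{t+1} G_{t+1} · δx_{t+1}`. The sum telescopes to
`G_0 · δx_0 - γ^F G_F · δx_F = 0`.
-/

open Finset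

theorem dotProduct_apply_single_eq {ι R : Type*} [Fintype ι] [DecidableEq ι] [CommSemiring R]
    [TopologicalSpace R] (L : (ι → R) →L[R] R) (v : ι → R) :
    (fun i => L (Pi.single i 1)) ⬝ᵥ v = L v := by
  conv_rhs => rw [pi_eq_sum_univ' v]
  simp [dotProduct, mul_comm]

theorem grad_dotProduct {k : ℕ} (g : (Fin k → ℝ) → ℝ) (x w : Fin k → ℝ) :
    grad g x ⬝ᵥ w = fderiv ℝ g x w :=
  dotProduct_apply_single_eq _ w

section PartialDerivatives

variable {X A Y : Type*} [NormedAddCommGroup X] [NormedSpace ℝ X] [NormedAddCommGroup A]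
  [NormedSpace ℝ A] [NormedAddCommGroup Y] [NormedSpace ℝ Y]

theorem hasFDerivAt_comp_prodMk_left {g : X × A → Y} {x : X} {b : A}
    (hg : DifferentiableAt ℝ g (x, b)) :
    HasFDerivAt (fun y => g (y, b)) ((fderiv ℝ g (x, b)).comp (.inl ℝ X A)) x :=
  hg.hasFDerivAt.comp x (hasFDerivAt_prodMk_left x b)

theorem hasFDerivAt_comp_prodMk_right {g : X × A → Y} {x : X} {b : A}
    (hg : DifferentiableAt ℝ g (x, b)) :
    HasFDerivAt (fun c => g (x, c)) ((fderiv ℝ g (x, b)).comp (.inr ℝ X A)) b :=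
  hg.hasFDerivAt.comp b (hasFDerivAt_prodMk_right x b)

theorem IsLocalMax.fderiv_reward_add_value_eq_zero {r : X × A → ℝ} {f : X × A → Y} {V : Y → ℝ}
    {γ : ℝ} {x : X} {b : A}
    (hr : DifferentiableAt ℝ r (x, b)) (hf : DifferentiableAt ℝ f (x, b))
    (hV : DifferentiableAt ℝ V (f (x, b)))
    (hmax : IsLocalMax (fun c => r (x, c) + γ * V (f (x, c))) b) (u : A) :
    fderiv ℝ r (x, b) (0, u) + γ * fderiv ℝ V (f (x, b)) (fderiv ℝ f (x, b) (0, u)) = 0 := by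
  have hQ := (hasFDerivAt_comp_prodMk_right hr).add
    ((hV.hasFDerivAt.comp b (hasFDerivAt_comp_prodMk_right hf)).const_mul γ)
  simpa using congrArg (· u) (hmax.hasFDerivAt_eq_zero hQ)

end PartialDerivatives

section StateDerivatives

variable {n m : ℕ} {x : Fin n → ℝ} {b : Fin m → ℝ}

theorem gradX_dotProduct {r : (Fin n → ℝ) × (Fin m → ℝ) → ℝ} (hr : DifferentiableAt ℝ r (x, b))
    (w : Fin n → ℝ) : gradX r x b ⬝ᵥ w = fderiv ℝ r (x, b) (w, 0) := by
  rw [show gradX r x b = grad (fun y => r (y, b)) x from rfl, grad_dotProduct,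
    (hasFDerivAt_comp_prodMk_left hr).fderiv]
  rfl

theorem jacX_mulVec {f : (Fin n → ℝ) × (Fin m → ℝ) → Fin n → ℝ}
    (hf : DifferentiableAt ℝ f (x, b)) (w : Fin n → ℝ) :
    jacX f x b *ᵥ w = fderiv ℝ f (x, b) (w, 0) := by
  ext j
  have hj := (hasFDerivAt_pi'.1 (hasFDerivAt_comp_prodMk_left hf) j).fderiv
  change (fun i => fderiv ℝ (fun y => f (y, b) j) x (Pi.single i 1)) ⬝ᵥ w = _
  rw [dotProduct_apply_single_eq, hj]
  rfl

theorem fderiv_apply_eq_of_costate {r : (Fin n → ℝ) × (Fin m → ℝ) → ℝ}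
    {f : (Fin n → ℝ) × (Fin m → ℝ) → Fin n → ℝ} {V : (Fin n → ℝ) → ℝ} {γ : ℝ} {y : Fin n → ℝ}
    (hr : DifferentiableAt ℝ r (x, b)) (hf : DifferentiableAt ℝ f (x, b))
    (hcostate : grad V x = gradX r x b + γ • (jacX f x b)ᵀ *ᵥ grad V y) (w : Fin n → ℝ) :
    fderiv ℝ V x w = fderiv ℝ r (x, b) (w, 0) + γ * fderiv ℝ V y (fderiv ℝ f (x, b) (w, 0)) := by
  rw [← grad_dotProduct, hcostate, add_dotProduct, smul_dotProduct, gradX_dotProduct hr,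
    mulVec_transpose, ← dotProduct_mulVec, jacX_mulVec hf, grad_dotProduct, smul_eq_mul]

end StateDerivatives

section Trajectory

variable {n m : ℕ} {E : Type*} [NormedAddCommGroup E] [NormedSpace ℝ E]

noncomputable def trajFDeriv (f : (Fin n → ℝ) × (Fin m → ℝ) → Fin n → ℝ) (x₀ : Fin n → ℝ)
    (u : E → ℕ → Fin m → ℝ) (U : ℕ → E →L[ℝ] (Fin m → ℝ)) (e : E) :
    ℕ → E →L[ℝ] (Fin n → ℝ)
  | 0 => 0
  | t + 1 => (fderiv ℝ f (traj f x₀ (u e) t, u e t)).comp ((trajFDeriv f x₀ u U e t).prod (U t))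

theorem hasFDerivAt_traj {f : (Fin n → ℝ) × (Fin m → ℝ) → Fin n → ℝ} (hf : Differentiable ℝ f)
    (x₀ : Fin n → ℝ) {u : E → ℕ → Fin m → ℝ} {U : ℕ → E →L[ℝ] (Fin m → ℝ)} {e : E}
    (hu : ∀ t, HasFDerivAt (fun e => u e t) (U t) e) (t : ℕ) :
    HasFDerivAt (fun e => traj f x₀ (u e) t) (trajFDeriv f x₀ u U e t) e := by
  induction t with
  | zero => exact hasFDerivAt_const x₀ e
  | succ t ih => exact (hf _).hasFDerivAt.comp e (ih.prodMk (hu t))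

end Trajectory

section TotalReward

variable {n m F : ℕ}

noncomputable def padProj (t : ℕ) : (Fin F → Fin m → ℝ) →L[ℝ] (Fin m → ℝ) :=
  if h : t < F then ContinuousLinearMap.proj ⟨t, h⟩ else 0

theorem padProj_apply (t : ℕ) (as : Fin F → Fin m → ℝ) : padProj t as = pad as t := by
  by_cases h : t < F <;> simp [padProj, pad, h]

theorem hasFDerivAt_pad (t : ℕ) (as : Fin F → Fin m → ℝ) :
    HasFDerivAt (fun as => pad as t) (padProj t) as := by
  rw [← funext fun as => padProj_apply t as]
  exact (padProj t).hasFDerivAt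

theorem hasFDerivAt_Rtot (γ : ℝ) {f : (Fin n → ℝ) × (Fin m → ℝ) → Fin n → ℝ}
    {r : (Fin n → ℝ) × (Fin m → ℝ) → ℝ} (hf : Differentiable ℝ f) (hr : Differentiable ℝ r)
    (x₀ : Fin n → ℝ) (a : Fin F → Fin m → ℝ) :
    HasFDerivAt (Rtot F γ f r x₀) (∑ t ∈ range F, γ ^ t • (fderiv ℝ r (traj f x₀ (pad a) t,
      pad a t)).comp ((trajFDeriv f x₀ pad padProj a t).prod (padProj t))) a :=
  HasFDerivAt.fun_sum fun t _ => ((hr _).hasFDerivAt.comp a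
    ((hasFDerivAt_traj hf x₀ (fun t => hasFDerivAt_pad t a) t).prodMk
      (hasFDerivAt_pad t a))).const_mul (γ ^ t)

end TotalReward

theorem sum_discounted_eq_zero_of_costate {R X A : Type*} [CommRing R]
    [AddCommGroup X] [Module R X] [AddCommGroup A] [Module R A]
    (F : ℕ) (γ : R) (Lr : ℕ → X × A →ₗ[R] R) (Lf : ℕ → X × A →ₗ[R] X) (φ : ℕ → X →ₗ[R] R)
    (d : ℕ → X) (p : ℕ → A) (hd₀ : d 0 = 0) (hd : ∀ t, d (t + 1) = Lf t (d t, p t))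
    (hφF : φ F = 0)
    (hcostate : ∀ t < F, ∀ w, φ t w = Lr t (w, 0) + γ * φ (t + 1) (Lf t (w, 0)))
    (hstationary : ∀ t < F, ∀ u, Lr t (0, u) + γ * φ (t + 1) (Lf t (0, u)) = 0) :
    ∑ t ∈ range F, γ ^ t * Lr t (d t, p t) = 0 := by
  have htelescope : ∀ t ∈ range F, γ ^ t * Lr t (d t, p t) =
      γ ^ t * φ t (d t) - γ ^ (t + 1) * φ (t + 1) (d (t + 1)) := by
    intro t ht
    rw [hd, show (d t, p t) = (d t, 0) + (0, p t) by simp, map_add, map_add, map_add,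
      hcostate t (mem_range.1 ht)]
    linear_combination (γ ^ t) * hstationary t (mem_range.1 ht) (p t)
  rw [sum_congr rfl htelescope, sum_range_sub', hd₀, hφF]
  simp

theorem stmt7_general {n m : ℕ} (F : ℕ) (γ : ℝ)
    (f : (Fin n → ℝ) × (Fin m → ℝ) → Fin n → ℝ)
    (r : (Fin n → ℝ) × (Fin m → ℝ) → ℝ)
    (hf : ContDiff ℝ 1 f) (hr : ContDiff ℝ 1 r)
    (V : (Fin n → ℝ) → ℝ) (hV : Differentiable ℝ V)
    (x₀ : Fin n → ℝ) (a : Fin F → Fin m → ℝ)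
    (x : ℕ → Fin n → ℝ) (hxdef : x = traj f x₀ (pad a))
    (Q : ℕ → (Fin m → ℝ) → ℝ)
    (hQdef : ∀ t, Q t = fun b => r (x t, b) + γ * V (f (x t, b)))
    (hgreedy : ∀ t : Fin F, IsLocalMax (Q t) (a t))
    (G : ℕ → Fin n → ℝ) (hGdef : ∀ t, G t = grad V (x t))
    (hGF : G F = 0)
    (hGrec : ∀ t < F, G t =
      gradX r (x t) (pad a t) + γ • (jacX f (x t) (pad a t))ᵀ.mulVec (G (t + 1))) :
    fderiv ℝ (Rtot F γ f r x₀) a = 0 := by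
  have hfd := hf.differentiable one_ne_zero
  have hrd := hr.differentiable one_ne_zero
  have hx_succ : ∀ t, x (t + 1) = f (x t, pad a t) := fun t => by rw [hxdef]; rfl
  have hcostate : ∀ t < F, ∀ w, fderiv ℝ V (x t) w = fderiv ℝ r (x t, pad a t) (w, 0) +
      γ * fderiv ℝ V (x (t + 1)) (fderiv ℝ f (x t, pad a t) (w, 0)) :=
    fun t ht => fderiv_apply_eq_of_costate (hrd _) (hfd _) (by rw [← hGdef, ← hGdef, hGrec t ht])
  have hstationary : ∀ t < F, ∀ u, fderiv ℝ r (x t, pad a t) (0, u) +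
      γ * fderiv ℝ V (x (t + 1)) (fderiv ℝ f (x t, pad a t) (0, u)) = 0 := by
    intro t ht
    have hmax := hgreedy ⟨t, ht⟩
    rw [hQdef, show a ⟨t, ht⟩ = pad a t by simp [pad, ht]] at hmax
    rw [hx_succ]
    exact hmax.fderiv_reward_add_value_eq_zero (hrd _) (hfd _) (hV _)
  have hφF : (fderiv ℝ V (x F) : (Fin n → ℝ) →ₗ[ℝ] ℝ) = 0 := by
    ext w
    simp [← grad_dotProduct, ← hGdef, hGF]
  rw [(hasFDerivAt_Rtot γ hfd hrd x₀ a).fderiv, ← hxdef]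
  ext v
  simpa using sum_discounted_eq_zero_of_costate F γ
    (fun t => fderiv ℝ r (x t, pad a t)) (fun t => fderiv ℝ f (x t, pad a t))
    (fun t => fderiv ℝ V (x t)) (fun t => trajFDeriv f x₀ pad padProj a t v)
    (fun t => padProj t v) rfl (fun t => by rw [hxdef]; rfl) hφF hcostate hstationary

/-- unbound-actions case of Theorem 1: a greedy trajectory with
unbound actions whose value-gradients satisfy the costate recursion is a
critical point of the total reward. -/
theorem stmt7 {n m : ℕ} (F : ℕ) (hF : 1 ≤ F) (γ : ℝ)
    (f : (Fin n → ℝ) × (Fin m → ℝ) → Fin n → ℝ)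
    (r : (Fin n → ℝ) × (Fin m → ℝ) → ℝ)
    (hf : ContDiff ℝ 1 f) (hr : ContDiff ℝ 1 r)
    (V : (Fin n → ℝ) → ℝ) (hV : Differentiable ℝ V)
    (x₀ : Fin n → ℝ) (a : Fin F → Fin m → ℝ)
    (x : ℕ → Fin n → ℝ) (hxdef : x = traj f x₀ (pad a))
    (Q : ℕ → (Fin m → ℝ) → ℝ)
    (hQdef : ∀ t, Q t = fun b => r (x t, b) + γ * V (f (x t, b)))
    (hgreedy : ∀ t : Fin F, IsLocalMax (Q t) (a t))
    (G : ℕ → Fin n → ℝ) (hGdef : ∀ t, G t = grad V (x t))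
    (hGF : G F = 0)
    (hGrec : ∀ t < F, G t =
      gradX r (x t) (pad a t) + γ • (jacX f (x t) (pad a t))ᵀ.mulVec (G (t + 1))) :
    fderiv ℝ (Rtot F γ f r x₀) a = 0 :=
  stmt7_general F γ f r hf hr V hV x₀ a x hxdef Q hQdef hgreedy G hGdef hGF hGrec
end

section
/- Let F ≥ 1, γ, λ ∈ ℝ, let r : {0,…,F−1} → ℝ, and let V : {0,…,F} → ℝ with V_F = 0. Define V' : {0,…,F} → ℝ by V'_F = 0 and V'_t = r_t + γ ( λ V'_{t+1} + (1−λ) V_{t+1} ) for 0 ≤ t < F. Then ( V_t = V'_t for all 0 ≤ t < F ) if and only if ( V_t = r_t + γ V_{t+1} for all 0 ≤ t < F ). -/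
/-- Section 2.2 of the paper: the approximate values equal
their targets along the trajectory exactly when the Bellman equation holds
along the trajectory. -/
theorem stmt16 (F : ℕ) (hF : 1 ≤ F) (γ lam : ℝ)
    (r : ℕ → ℝ) (V : ℕ → ℝ) (hVF : V F = 0)
    (V' : ℕ → ℝ) (hV'F : V' F = 0)
    (hrec : ∀ t < F, V' t = r t + γ * (lam * V' (t + 1) + (1 - lam) * V (t + 1))) :
    (∀ t < F, V t = V' t) ↔ (∀ t < F, V t = r t + γ * V (t + 1)) := by
  constructor
  · intro h t ht
    have hVV' : V' (t + 1) = V (t + 1) := by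
      rcases lt_or_eq_of_le (Nat.succ_le_of_lt ht) with h1 | h1
      · exact (h _ h1).symm
      · have : t + 1 = F := h1; rw [this, hVF, hV'F]
    rw [h t ht, hrec t ht, hVV']
    ring
  · intro h
    have key : ∀ k t, t + k = F → V t = V' t := by
      intro k
      induction k with
      | zero => intro t ht; simp at ht; rw [ht, hVF, hV'F]
      | succ n ih =>
        intro t ht
        have htF : t < F := by omega
        have h1 : V (t + 1) = V' (t + 1) := ih (t + 1) (by omega)
        rw [h t htF, hrec t htF, ← h1]
        ring
    intro t ht
    exact key (F - t) t (by omega)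
end

section
/- Let F ≥ 1, let λ, γ ∈ ℝ, let A_t be n × n real matrices, M_t be p × n real matrices, and δ_t ∈ ℝⁿ for 0 ≤ t < F. Let d : {0,…,F} → ℝⁿ satisfy d_F = 0 and d_t = δ_t + λγ A_t d_{t+1} for 0 ≤ t < F, and let the p × n matrices E_t satisfy E_0 = M_0 and E_t = M_t + λγ E_{t−1} A_{t−1} for 1 ≤ t < F. Then Σ_{t=0}^{F−1} M_t d_t = Σ_{t=0}^{F−1} E_t δ_t. -/
open Matrix

/-- Ordered product `A t * A (t+1) * ⋯ * A (s-1)`. -/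
noncomputable def pm {n : ℕ} (A : ℕ → Matrix (Fin n) (Fin n) ℝ) (t s : ℕ) :
    Matrix (Fin n) (Fin n) ℝ :=
  ((List.range' t (s - t)).map A).prod

lemma pm_self {n : ℕ} (A : ℕ → Matrix (Fin n) (Fin n) ℝ) (t : ℕ) :
    pm A t t = 1 := by simp [pm]

lemma pm_succ_right {n : ℕ} (A : ℕ → Matrix (Fin n) (Fin n) ℝ) {t s : ℕ} (h : t ≤ s) :
    pm A t (s + 1) = pm A t s * A s := by
  have h1 : s + 1 - t = (s - t) + 1 := by omega
  rw [pm, h1, List.range'_concat]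
  have h2 : t + (s - t) = s := by omega
  simp [pm, h2]

lemma pm_left {n : ℕ} (A : ℕ → Matrix (Fin n) (Fin n) ℝ) {t s : ℕ} (h : t < s) :
    A t * pm A (t + 1) s = pm A t s := by
  have h1 : s - t = (s - (t + 1)) + 1 := by omega
  rw [pm, pm, h1, List.range'_succ]
  simp

lemma mulVec_sum' {n m : ℕ} {ι : Type*} (s : Finset ι) (A : Matrix (Fin m) (Fin n) ℝ)
    (f : ι → Fin n → ℝ) : A.mulVec (∑ i ∈ s, f i) = ∑ i ∈ s, A.mulVec (f i) := by
  induction s using Finset.cons_induction with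
  | empty => simp
  | cons a s ha ih => simp [Finset.sum_cons, Matrix.mulVec_add, ih]

lemma sum_mulVec' {n m : ℕ} {ι : Type*} (s : Finset ι) (f : ι → Matrix (Fin m) (Fin n) ℝ)
    (v : Fin n → ℝ) : (∑ i ∈ s, f i).mulVec v = ∑ i ∈ s, (f i).mulVec v := by
  induction s using Finset.cons_induction with
  | empty => simp
  | cons a s ha ih => simp [Finset.sum_cons, Matrix.add_mulVec, ih]

/-- Appendix B of the paper: the batch VGL(λ) weight update
`Σ_t M_t d_t` equals the forward eligibility-trace accumulation `Σ_t E_t δ_t`. -/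
theorem stmt18 {n p : ℕ} (F : ℕ) (hF : 1 ≤ F) (lam γ : ℝ)
    (A : ℕ → Matrix (Fin n) (Fin n) ℝ)
    (M : ℕ → Matrix (Fin p) (Fin n) ℝ)
    (δ : ℕ → Fin n → ℝ)
    (d : ℕ → Fin n → ℝ) (hdF : d F = 0)
    (hdrec : ∀ t < F, d t = δ t + (lam * γ) • (A t).mulVec (d (t + 1)))
    (E : ℕ → Matrix (Fin p) (Fin n) ℝ)
    (hE0 : E 0 = M 0)
    (hErec : ∀ t, 1 ≤ t → t < F → E t = M t + (lam * γ) • (E (t - 1) * A (t - 1))) :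
    ∑ t ∈ Finset.range F, (M t).mulVec (d t) =
      ∑ t ∈ Finset.range F, (E t).mulVec (δ t) := by
  set c : ℝ := lam * γ with hc
  -- closed form for d
  have hd : ∀ m t, t + m = F →
      d t = ∑ s ∈ Finset.Ico t F, (c ^ (s - t)) • (pm A t s).mulVec (δ s) := by
    intro m
    induction m with
    | zero =>
      intro t ht
      have htF : t = F := by omega
      rw [htF]
      simp [hdF]
    | succ m ih =>
      intro t ht
      have htF : t < F := by omega
      have ih' := ih (t + 1) (by omega)
      rw [hdrec t htF, ih']
      conv_rhs => rw [Finset.sum_eq_sum_Ico_succ_bot htF]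
      congr 1
      · simp [pm_self]
      · rw [mulVec_sum', Finset.smul_sum]
        apply Finset.sum_congr rfl
        intro s hs
        simp only [Finset.mem_Ico] at hs
        rw [Matrix.mulVec_smul, Matrix.mulVec_mulVec, pm_left A (by omega : t < s),
          smul_smul]
        congr 1
        have h1 : s - t = (s - (t + 1)) + 1 := by omega
        rw [h1, pow_succ]
        ring
  -- closed form for E
  have hEform : ∀ t < F,
      E t = ∑ r ∈ Finset.range (t + 1), (c ^ (t - r)) • (M r * pm A r t) := by
    intro t
    induction t with
    | zero => intro _; simp [hE0, pm_self]
    | succ t ih =>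
      intro htF
      have ih' := ih (by omega)
      rw [hErec (t + 1) (by omega) htF]
      simp only [Nat.add_sub_cancel]
      rw [ih', Matrix.sum_mul, Finset.smul_sum]
      conv_rhs => rw [Finset.sum_range_succ]
      rw [add_comm (M (t + 1))]
      congr 1
      · apply Finset.sum_congr rfl
        intro r hr
        simp only [Finset.mem_range] at hr
        rw [Matrix.smul_mul, smul_smul, Matrix.mul_assoc, pm_succ_right A (by omega : r ≤ t)]
        congr 1
        have h1 : t + 1 - r = (t - r) + 1 := by omega
        rw [h1, pow_succ]
        ring
      · simp [pm_self]
  calc ∑ t ∈ Finset.range F, (M t).mulVec (d t)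
      = ∑ t ∈ Finset.range F, ∑ s ∈ Finset.Ico t F,
          (c ^ (s - t)) • (M t * pm A t s).mulVec (δ s) := by
        apply Finset.sum_congr rfl
        intro t ht
        simp only [Finset.mem_range] at ht
        rw [hd (F - t) t (by omega), mulVec_sum']
        apply Finset.sum_congr rfl
        intro s _
        rw [Matrix.mulVec_smul, Matrix.mulVec_mulVec]
    _ = ∑ s ∈ Finset.range F, ∑ t ∈ Finset.range (s + 1),
          (c ^ (s - t)) • (M t * pm A t s).mulVec (δ s) := by
        apply Finset.sum_comm'
        intro x y
        simp only [Finset.mem_range, Finset.mem_Ico]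
        omega
    _ = ∑ t ∈ Finset.range F, (E t).mulVec (δ t) := by
        apply Finset.sum_congr rfl
        intro s hs
        simp only [Finset.mem_range] at hs
        rw [hEform s hs, sum_mulVec']
        apply Finset.sum_congr rfl
        intro r _
        rw [Matrix.smul_mulVec]
end
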